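/- arXiv:1401.1894 — 2 statements merged into one kernel-verified Lean document; each statement's English description precedes it below -/
import Mathlib

section
/- If S is guessable with fewer than α mind changes, witnessed by G and H, then for every ordinal β and every finite sequence σ ∈ S_β, we have H(σ) ≥ β. -/
open Filter Topology Classical

/-- The initial segment `f↾n` of an infinite sequence. -/
def res (f : ℕ → ℕ) (n : ℕ) : List ℕ := List.ofFn (fun i : Fin n => f i)

/-- `[X]`: the set of infinite sequences all of whose finite initial segments lie in `X`. -/
def seqsIn (X : Set (List ℕ)) : Set (ℕ → ℕ) := {f | ∀ n, res f n ∈ X}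

/-- The simplified remainder `S_α`. -/
noncomputable def SRem (S : Set (ℕ → ℕ)) (α : Ordinal.{0}) : Set (List ℕ) :=
  Ordinal.limitRecOn α Set.univ
    (fun _ prev => {x | x ∈ prev ∧ ∃ f g : ℕ → ℕ,
      f ∈ seqsIn prev ∧ g ∈ seqsIn prev ∧ res f x.length = x ∧ res g x.length = x ∧
      f ∈ S ∧ g ∉ S})
    (fun _ _ ih => ⋂ (β : Ordinal.{0}) (h : β < _), ih β h)

/-- Wadge's remainder `Rm_μ(A,B)`. -/
noncomputable def Rm (A B : Set (ℕ → ℕ)) (μ : Ordinal.{0}) : Set (ℕ → ℕ) :=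
  if μ = 0 then Set.univ
  else ⋂ (ν : {ν : Ordinal.{0} // ν < μ}),
    closure (Rm A B ν.1 ∩ A) ∩ closure (Rm A B ν.1 ∩ B)
termination_by μ
decreasing_by exact ν.2

/-- The least ordinal at which the simplified remainders stabilize. -/
noncomputable def alphaS (S : Set (ℕ → ℕ)) : Ordinal.{0} :=
  sInf {α | SRem S α = SRem S (α + 1)}

/-- `S_∞`, the stable value of the simplified remainders. -/
noncomputable def Sinf (S : Set (ℕ → ℕ)) : Set (List ℕ) := SRem S (alphaS S)

/-- `β(σ)`: the least ordinal `γ` with `σ ∉ S_γ`. -/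
noncomputable def betaOf (S : Set (ℕ → ℕ)) (σ : List ℕ) : Ordinal.{0} :=
  sInf {γ | σ ∉ SRem S γ}

/-- `G` guesses `S`. -/
def Guesses (G : List ℕ → Bool) (S : Set (ℕ → ℕ)) : Prop :=
  ∀ f : ℕ → ℕ, ∀ᶠ n in atTop, (G (res f n) = true ↔ f ∈ S)

def Guessable (S : Set (ℕ → ℕ)) : Prop := ∃ G, Guesses G S

/-- `G, H` witness that `S` is guessable with `< α` mind changes. -/
def WitnessMC (S : Set (ℕ → ℕ)) (α : Ordinal.{0}) (G : List ℕ → Bool)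
    (H : List ℕ → Ordinal.{0}) : Prop :=
  Guesses G S ∧ (∀ σ, H σ < α) ∧
  (∀ (f : ℕ → ℕ) (n : ℕ), H (res f (n + 1)) ≤ H (res f n)) ∧
  (∀ (f : ℕ → ℕ) (n : ℕ), G (res f (n + 1)) ≠ G (res f n) →
    H (res f (n + 1)) < H (res f n))

def GuessableMC (S : Set (ℕ → ℕ)) (α : Ordinal.{0}) : Prop := ∃ G H, WitnessMC S α G H

/-- An ordinal is even if it is of the form `λ + n` with `λ` limit or zero and `n` even. -/
def OrdEven (o : Ordinal.{0}) : Prop :=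
  ∃ (l : Ordinal.{0}) (n : ℕ), (l = 0 ∨ Order.IsSuccLimit l) ∧ o = l + n ∧ Even n

/-- The Hausdorff difference set `D_α((A_η)_{η<α})`. -/
def DSet (α : Ordinal.{0}) (A : Ordinal.{0} → Set (ℕ → ℕ)) : Set (ℕ → ℕ) :=
  {x | ∃ η, η < α ∧ x ∈ A η ∧ (∀ η', η' < η → x ∉ A η') ∧ (OrdEven η ↔ ¬ OrdEven α)}

/-- Membership in the class `D_α(Σ⁰₁)`. -/
def InDiff (α : Ordinal.{0}) (S : Set (ℕ → ℕ)) : Prop :=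
  ∃ A : Ordinal.{0} → Set (ℕ → ℕ), (∀ η, η < α → IsOpen (A η)) ∧
    (∀ η η', η ≤ η' → η' < α → A η ⊆ A η') ∧ S = DSet α A
/-- Wadge's `Rm_Ω(S)`: the stable value of `Rm_μ(S, Sᶜ)`. -/
noncomputable def RmInf (S : Set (ℕ → ℕ)) : Set (ℕ → ℕ) :=
  Rm S Sᶜ (sInf {μ : Ordinal.{0} | Rm S Sᶜ μ = Rm S Sᶜ (μ + 1)})

/-- The canonical guesser `G_S`. -/
noncomputable def GS (S : Set (ℕ → ℕ)) (σ : List ℕ) : Bool :=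
  if (∃ f : ℕ → ℕ, res f σ.length = σ ∧ f ∈ seqsIn (SRem S (betaOf S σ - 1))) then
    decide (∃ f : ℕ → ℕ, res f σ.length = σ ∧ f ∈ seqsIn (SRem S (betaOf S σ - 1)) ∧ f ∈ S)
  else if h : σ = [] then false
  else GS S σ.dropLast
termination_by σ.length
decreasing_by
  simp only [List.length_dropLast]
  exact Nat.sub_lt (List.length_pos_iff.mpr h) one_pos

/-- `S` is `F_σ`: a countable union of closed sets. -/
def IsFsigma (S : Set (ℕ → ℕ)) : Prop :=
  ∃ C : ℕ → Set (ℕ → ℕ), (∀ n, IsClosed (C n)) ∧ S = ⋃ n, C n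

/-- Boolean combinations of open sets. -/
inductive BoolComb : Set (ℕ → ℕ) → Prop
  | isOpen {s : Set (ℕ → ℕ)} : IsOpen s → BoolComb s
  | compl {s : Set (ℕ → ℕ)} : BoolComb s → BoolComb sᶜ
  | union {s t : Set (ℕ → ℕ)} : BoolComb s → BoolComb t → BoolComb (s ∪ t)

/-- The Borel class `Σ⁰_α` on Baire space (for `α ≥ 1`). -/
noncomputable def Sigma0 (α : Ordinal.{0}) : Set (Set (ℕ → ℕ)) :=
  if α = 1 then {s | IsOpen s}
  else {s | ∃ g : ℕ → Set (ℕ → ℕ), s = ⋃ n, g n ∧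
    ∀ n, ∃ β : {β : Ordinal.{0} // β < α}, 1 ≤ β.1 ∧ (g n)ᶜ ∈ Sigma0 β.1}
termination_by α
decreasing_by exact β.2

/-- The ambiguous Borel class `Δ⁰_α`. -/
noncomputable def Delta0 (α : Ordinal.{0}) : Set (Set (ℕ → ℕ)) :=
  {s | s ∈ Sigma0 α ∧ sᶜ ∈ Sigma0 α}

/-- The Boolean characteristic function. -/
noncomputable def chi (X : Set (ℕ → ℕ)) (f : ℕ → ℕ) : Bool := decide (f ∈ X)

/-- `G` guesses `S` based on the sequence of sets `Ss`. -/
def GuessesBased (G : List Bool → Bool) (Ss : ℕ → Set (ℕ → ℕ)) (S : Set (ℕ → ℕ)) : Prop :=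
  ∀ f : ℕ → ℕ, ∀ᶠ n in atTop,
    (G (List.ofFn (fun i : Fin n => chi (Ss i) f)) = true ↔ f ∈ S)

/-- `S` is `μ`th-order guessable. -/
def HigherGuessable (μ : Ordinal.{0}) (S : Set (ℕ → ℕ)) : Prop :=
  ∃ Ss : ℕ → Set (ℕ → ℕ), (∀ i, ∃ μi, μi < μ ∧ Ss i ∈ Delta0 (μi + 1)) ∧
    ∃ G : List Bool → Bool, GuessesBased G Ss S

lemma SRem_add_one (S : Set (ℕ → ℕ)) (β : Ordinal.{0}) :
    SRem S (β + 1) = {x | x ∈ SRem S β ∧ ∃ f g : ℕ → ℕ,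
      f ∈ seqsIn (SRem S β) ∧ g ∈ seqsIn (SRem S β) ∧ res f x.length = x ∧
      res g x.length = x ∧ f ∈ S ∧ g ∉ S} := by
  rw [SRem, Ordinal.limitRecOn_add_one]
  rfl

lemma SRem_of_isSuccLimit (S : Set (ℕ → ℕ)) {β : Ordinal.{0}} (hβ : Order.IsSuccLimit β) :
    SRem S β = ⋂ (δ : Ordinal.{0}) (_ : δ < β), SRem S δ := by
  rw [SRem, Ordinal.limitRecOn_limit _ _ _ _ hβ]
  rfl

lemma SRem_antitone (S : Set (ℕ → ℕ)) : Antitone (SRem S) := by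
  intro γ β hγβ
  induction β using WellFoundedLT.induction with
  | _ β ih =>
    rcases hγβ.eq_or_lt with rfl | hlt
    · exact subset_rfl
    rcases Ordinal.zero_or_succ_or_isSuccLimit β with rfl | ⟨δ, rfl⟩ | hβ
    · exact absurd hlt not_lt_zero
    · rw [Order.succ_eq_add_one, SRem_add_one]
      exact fun x hx => ih δ (Order.lt_succ δ) (Order.lt_succ_iff.mp hlt) hx.1
    · rw [SRem_of_isSuccLimit S hβ]
      exact Set.biInter_subset_of_mem hlt

lemma Guesses.eq_true_iff_of_eventually_const {G : List ℕ → Bool} {S : Set (ℕ → ℕ)}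
    (hG : Guesses G S) {f : ℕ → ℕ} {m : ℕ} {b : Bool} (hb : ∀ n, m ≤ n → G (res f n) = b) :
    b = true ↔ f ∈ S := by
  obtain ⟨n, hn, hmn⟩ := ((hG f).and (eventually_ge_atTop m)).exists
  rwa [hb n hmn] at hn

lemma guess_const_of_forall_le {G : List ℕ → Bool} {H : List ℕ → Ordinal.{0}}
    (hmono : ∀ (f : ℕ → ℕ) (n : ℕ), H (res f (n + 1)) ≤ H (res f n))
    (hmc : ∀ (f : ℕ → ℕ) (n : ℕ), G (res f (n + 1)) ≠ G (res f n) →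
      H (res f (n + 1)) < H (res f n))
    {f : ℕ → ℕ} {m : ℕ} (hlow : ∀ n, m ≤ n → H (res f m) ≤ H (res f n)) :
    ∀ n, m ≤ n → G (res f n) = G (res f m) := by
  have hH : ∀ n, m ≤ n → H (res f n) = H (res f m) := fun n hmn =>
    le_antisymm (antitone_nat_of_succ_le (f := fun k => H (res f k)) (hmono f) hmn)
      (hlow n hmn)
  intro n hmn
  induction n, hmn using Nat.le_induction with
  | base => rfl
  | succ n hmn ih =>
    rw [← ih]
    by_contra hne
    have := hmc f n hne
    rw [hH n hmn, hH (n + 1) (hmn.trans n.le_succ)] at this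
    exact this.false

theorem stmt7 (S : Set (ℕ → ℕ)) (α : Ordinal.{0}) (G : List ℕ → Bool)
    (H : List ℕ → Ordinal.{0}) (hW : WitnessMC S α G H) :
    ∀ (β : Ordinal.{0}) (σ : List ℕ), σ ∈ SRem S β → β ≤ H σ := by
  obtain ⟨hG, -, hmono, hmc⟩ := hW
  intro β
  induction β using WellFoundedLT.induction with
  | _ β ih =>
    intro σ hσ
    by_contra! hlt
    have hσ' := SRem_antitone S (Order.add_one_le_of_lt hlt) hσ
    rw [SRem_add_one] at hσ'
    obtain ⟨-, f, g, hf, hg, hfσ, hgσ, hfS, hgS⟩ := hσ'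
    -- By induction every extension of `σ` in `[S_{H σ}]` keeps `H` at `H σ`, so `G` never changes.
    have hconst : ∀ h ∈ seqsIn (SRem S (H σ)), res h σ.length = σ →
        ∀ n, σ.length ≤ n → G (res h n) = G σ := by
      intro h hh hhσ
      have := guess_const_of_forall_le (m := σ.length) hmono hmc fun n _ =>
        hhσ ▸ ih _ hlt _ (hh n)
      rwa [hhσ] at this
    exact hgS ((hG.eq_true_iff_of_eventually_const (hconst g hg hgσ)).mp
      ((hG.eq_true_iff_of_eventually_const (hconst f hf hfσ)).mpr hfS))
end

section
/- S ⊆ ℕ^ℕ is a Boolean combination of open sets if and only if S is guessable with fewer than ω mind changes. -/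
open Filter Topology Classical

/-!
A Boolean combination of open sets is guessed by combining, with `!` and `||`, the guessers
"the cylinder of `σ` lies in `U`" for open `U`; each of these changes its mind at most once, and
the mind-change counters simply add up.

Conversely, given `G` and `H < ω`, the number of mind changes of `G` along `f` is bounded by
`H []`, so it converges to a finite total `c f`, and `f ∈ S` is decided by the parity of `c f`.
Each set `{f | j ≤ c f}` is open since a mind change is witnessed by a finite prefix; hence
each level set `{f | c f = j}` is a difference of two open sets and `S` is a finite union of them.
-/

open PiNat (cylinder)

lemma length_res (f : ℕ → ℕ) (n : ℕ) : (res f n).length = n := List.length_ofFn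

lemma res_eq_res_iff_mem_cylinder {f g : ℕ → ℕ} {n : ℕ} :
    res g n = res f n ↔ g ∈ cylinder f n := by
  simp only [res, List.ofFn_inj, funext_iff, Fin.forall_iff, PiNat.mem_cylinder_iff]

lemma continuous_comp_res {X : Type*} [TopologicalSpace X] (F : List ℕ → X) (n : ℕ) :
    Continuous fun f : ℕ → ℕ => F (res f n) :=
  (continuous_of_discreteTopology (f := fun x : Fin n → ℕ => F (List.ofFn x))).comp
    (continuous_pi fun i => continuous_apply (i : ℕ))

lemma exists_cylinder_subset_of_isOpen {U : Set (ℕ → ℕ)} (hU : IsOpen U) {f : ℕ → ℕ}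
    (hf : f ∈ U) : ∃ n, cylinder f n ⊆ U := by
  obtain ⟨_, ⟨x, n, rfl⟩, hfx, hxU⟩ :=
    (PiNat.isTopologicalBasis_cylinders fun _ => ℕ).mem_nhds_iff.mp (hU.mem_nhds hf)
  exact ⟨n, PiNat.mem_cylinder_iff_eq.mp hfx ▸ hxU⟩

lemma BoolComb.empty : BoolComb ∅ := .isOpen isOpen_empty

lemma BoolComb.inter {s t : Set (ℕ → ℕ)} (hs : BoolComb s) (ht : BoolComb t) :
    BoolComb (s ∩ t) :=
  Set.inter_eq_compl_compl_union_compl s t ▸ (hs.compl.union ht.compl).compl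

lemma BoolComb.diff {s t : Set (ℕ → ℕ)} (hs : BoolComb s) (ht : BoolComb t) :
    BoolComb (s \ t) :=
  hs.inter ht.compl

lemma BoolComb.finset_biUnion {ι : Type*} (I : Finset ι) {t : ι → Set (ℕ → ℕ)}
    (ht : ∀ i ∈ I, BoolComb (t i)) : BoolComb (⋃ i ∈ I, t i) := by
  induction I using Finset.induction_on with
  | empty => simpa using BoolComb.empty
  | insert i I _ ih =>
    rw [Finset.set_biUnion_insert]
    exact (ht i (I.mem_insert_self i)).union
      (ih fun j hj => ht j (Finset.mem_insert_of_mem hj))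

lemma boolComb_setOf_comp {c : (ℕ → ℕ) → ℕ} {N : ℕ} (hcN : ∀ f, c f ≤ N)
    (hc : ∀ j, IsOpen {f | j ≤ c f}) (p : ℕ → Prop) : BoolComb {f | p (c f)} := by
  have hlevel : ∀ j, {f | c f = j} = {f | j ≤ c f} \ {f | j + 1 ≤ c f} := by
    intro j; ext f; simp only [Set.mem_ofPred_eq, Set.mem_sdiff]; omega
  have hS : {f | p (c f)} = ⋃ j ∈ (Finset.range (N + 1)).filter p, {f | c f = j} := by
    ext f
    simp only [Set.mem_ofPred_eq, Set.mem_iUnion, Finset.mem_filter, Finset.mem_range]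
    exact ⟨fun h => ⟨c f, ⟨Nat.lt_succ_of_le (hcN f), h⟩, rfl⟩,
      fun ⟨_, ⟨_, h⟩, hj⟩ => hj ▸ h⟩
  rw [hS]
  exact BoolComb.finset_biUnion _ fun j _ =>
    hlevel j ▸ (BoolComb.isOpen (hc j)).diff (.isOpen (hc (j + 1)))

lemma boolComb_setOf_ciSup {k : ℕ → (ℕ → ℕ) → ℕ} {N : ℕ} (hk : ∀ n, Continuous (k n))
    (hkN : ∀ n f, k n f ≤ N) (p : ℕ → Prop) : BoolComb {f | p (⨆ n, k n f)} := by
  have hbdd : ∀ f, BddAbove (Set.range (k · f)) := fun f =>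
    ⟨N, Set.forall_mem_range.mpr (hkN · f)⟩
  refine boolComb_setOf_comp (fun f => ciSup_le (hkN · f)) (fun j => ?_) p
  have hunion : {f | j ≤ ⨆ n, k n f} = ⋃ n, k n ⁻¹' Set.Ici j := by
    ext f
    simp only [Set.mem_ofPred_eq, Set.mem_iUnion, Set.mem_preimage, Set.mem_Ici]
    refine ⟨fun hj => ?_, fun ⟨n, hn⟩ => le_ciSup_of_le (hbdd f) n hn⟩
    obtain ⟨n, hn⟩ := Nat.sSup_mem (Set.range_nonempty (k · f)) (hbdd f)
    exact ⟨n, hj.trans_eq hn.symm⟩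
  rw [hunion]
  exact isOpen_iUnion fun n => (hk n).isOpen_preimage _ (isOpen_discrete _)

def WitnessMCNat (S : Set (ℕ → ℕ)) (G : List ℕ → Bool) (H : List ℕ → ℕ) : Prop :=
  Guesses G S ∧ (∀ f n, H (res f (n + 1)) ≤ H (res f n)) ∧
    (∀ f n, G (res f (n + 1)) ≠ G (res f n) → H (res f (n + 1)) < H (res f n))

lemma guessableMC_omega0_iff {S : Set (ℕ → ℕ)} :
    GuessableMC S Ordinal.omega0 ↔ ∃ G H, WitnessMCNat S G H := by
  constructor
  · rintro ⟨G, H, hG, hlt, hmono, hstrict⟩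
    choose n hn using fun σ => Ordinal.lt_omega0.mp (hlt σ)
    refine ⟨G, n, hG, fun f k => ?_, fun f k hk => ?_⟩
    · exact_mod_cast hn (res f (k + 1)) ▸ hn (res f k) ▸ hmono f k
    · exact_mod_cast hn (res f (k + 1)) ▸ hn (res f k) ▸ hstrict f k hk
  · rintro ⟨G, H, hG, hmono, hstrict⟩
    exact ⟨G, fun σ => H σ, hG, fun σ => Ordinal.natCast_lt_omega0 _,
      fun f n => Nat.cast_le.mpr (hmono f n),
      fun f n hn => Nat.cast_lt.mpr (hstrict f n hn)⟩

section WitnessMCNat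

variable {S T : Set (ℕ → ℕ)} {G G' : List ℕ → Bool} {H H' : List ℕ → ℕ}

lemma exists_witnessMCNat_of_isOpen (hS : IsOpen S) : ∃ G H, WitnessMCNat S G H := by
  let G σ := decide (∀ g, res g σ.length = σ → g ∈ S)
  have hG : ∀ f n, G (res f n) = true ↔ cylinder f n ⊆ S := by
    intro f n
    simp only [G, decide_eq_true_eq, length_res, res_eq_res_iff_mem_cylinder]
    rfl
  have hG_succ : ∀ f n, G (res f n) = true → G (res f (n + 1)) = true := by
    simp only [hG]
    exact fun f n h => (PiNat.cylinder_anti f n.le_succ).trans h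
  refine ⟨G, fun σ => if G σ then 0 else 1, fun f => ?_, fun f n => ?_, fun f n hn => ?_⟩
  · by_cases hf : f ∈ S
    · obtain ⟨n, hn⟩ := exists_cylinder_subset_of_isOpen hS hf
      filter_upwards [eventually_ge_atTop n] with m hm
      simp only [hG]
      exact iff_of_true ((PiNat.cylinder_anti f hm).trans hn) hf
    · refine .of_forall fun n => ?_
      simp only [hG]
      exact iff_of_false (fun h => hf (h (PiNat.self_mem_cylinder f n))) hf
  all_goals
    have := hG_succ f n
    dsimp only
    split_ifs <;> simp_all

lemma WitnessMCNat.compl (h : WitnessMCNat S G H) : WitnessMCNat Sᶜ (fun σ => !G σ) H := by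
  obtain ⟨hG, hmono, hstrict⟩ := h
  refine ⟨fun f => (hG f).mono fun n hn => ?_, hmono, fun f n hn => hstrict f n ?_⟩
  · simp [← hn]
  · simpa using hn

lemma WitnessMCNat.union (h : WitnessMCNat S G H) (h' : WitnessMCNat T G' H') :
    WitnessMCNat (S ∪ T) (fun σ => G σ || G' σ) (fun σ => H σ + H' σ) := by
  obtain ⟨hG, hmono, hstrict⟩ := h
  obtain ⟨hG', hmono', hstrict'⟩ := h'
  refine ⟨fun f => ?_, fun f n => add_le_add (hmono f n) (hmono' f n), fun f n hn => ?_⟩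
  · filter_upwards [hG f, hG' f] with n hn hn'
    rw [Set.mem_union, ← hn, ← hn', Bool.or_eq_true]
  · by_cases hc : G (res f (n + 1)) = G (res f n)
    · have hc' : G' (res f (n + 1)) ≠ G' (res f n) := fun hc' =>
        hn (by dsimp only; rw [hc, hc'])
      exact add_lt_add_of_le_of_lt (hmono f n) (hstrict' f n hc')
    · exact add_lt_add_of_lt_of_le (hstrict f n hc) (hmono' f n)

lemma BoolComb.exists_witnessMCNat (hS : BoolComb S) : ∃ G H, WitnessMCNat S G H := by
  induction hS with
  | isOpen hU => exact exists_witnessMCNat_of_isOpen hU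
  | compl _ ih =>
    obtain ⟨G, H, h⟩ := ih
    exact ⟨_, _, h.compl⟩
  | union _ _ ih ih' =>
    obtain ⟨G, H, h⟩ := ih
    obtain ⟨G', H', h'⟩ := ih'
    exact ⟨_, _, h.union h'⟩

end WitnessMCNat

def numChanges (b : ℕ → Bool) : ℕ → ℕ
  | 0 => 0
  | n + 1 => numChanges b n + if b (n + 1) = b n then 0 else 1

section numChanges

variable {b : ℕ → Bool}

lemma numChanges_mono : Monotone (numChanges b) :=
  monotone_nat_of_le_succ fun _ => Nat.le_add_right _ _

lemma apply_eq_apply_zero_iff_even_numChanges (n : ℕ) :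
    b n = b 0 ↔ Even (numChanges b n) := by
  induction n with
  | zero => simp [numChanges]
  | succ n ih =>
    by_cases hc : b (n + 1) = b n
    · simp [numChanges, hc, ih]
    · have hflip : b (n + 1) = !b n := by revert hc; cases b (n + 1) <;> cases b n <;> simp
      simp [numChanges, Nat.even_add_one, ← ih, hflip, Bool.eq_not_iff]

lemma numChanges_add_le {h : ℕ → ℕ} (hh : Antitone h)
    (hstrict : ∀ n, b (n + 1) ≠ b n → h (n + 1) < h n) (n : ℕ) :
    numChanges b n + h n ≤ h 0 := by
  induction n with
  | zero => simp [numChanges]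
  | succ n ih =>
    have : h (n + 1) ≤ h n := hh (Nat.le_add_right n 1)
    by_cases hc : b (n + 1) = b n
    · simp only [numChanges, if_pos hc]; omega
    · have := hstrict n hc; simp only [numChanges, if_neg hc]; omega

end numChanges

lemma Monotone.eventually_eq_ciSup_nat {k : ℕ → ℕ} (hk : Monotone k)
    (hb : BddAbove (Set.range k)) : ∀ᶠ n in atTop, k n = ⨆ n, k n :=
  tendsto_pure.mp (nhds_discrete ℕ ▸ tendsto_atTop_ciSup hk hb)

lemma continuous_numChanges_comp_res (G : List ℕ → Bool) (n : ℕ) :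
    Continuous fun f => numChanges (fun m => G (res f m)) n := by
  induction n with
  | zero => exact continuous_const
  | succ n ih =>
    exact ih.add ((continuous_of_discreteTopology
      (f := fun p : Bool × Bool => if p.1 = p.2 then 0 else 1)).comp
      ((continuous_comp_res G (n + 1)).prodMk (continuous_comp_res G n)))

lemma WitnessMCNat.boolComb {S : Set (ℕ → ℕ)} {G : List ℕ → Bool} {H : List ℕ → ℕ}
    (h : WitnessMCNat S G H) : BoolComb S := by
  obtain ⟨hG, hmono, hstrict⟩ := h
  let k n f := numChanges (fun m => G (res f m)) n
  have hkH : ∀ n f, k n f ≤ H [] := fun n f => (Nat.le_add_right _ _).trans <|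
    numChanges_add_le (h := fun m => H (res f m)) (antitone_nat_of_succ_le (hmono f))
      (hstrict f) n
  have hS : S = {f | Even (⨆ n, k n f) ↔ G [] = true} := by
    ext f
    obtain ⟨n, hGn, hkn⟩ := ((hG f).and (numChanges_mono.eventually_eq_ciSup_nat
      ⟨H [], Set.forall_mem_range.mpr (hkH · f)⟩)).exists
    have hparity : G (res f n) = G [] ↔ Even (⨆ n, k n f) :=
      hkn ▸ apply_eq_apply_zero_iff_even_numChanges (b := fun m => G (res f m)) n
    rw [Set.mem_ofPred_eq, ← hGn, ← hparity]
    cases G (res f n) <;> cases G [] <;> decide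
  rw [hS]
  exact boolComb_setOf_ciSup (continuous_numChanges_comp_res G) hkH (Even · ↔ G [] = true)

theorem stmt9 (S : Set (ℕ → ℕ)) :
    BoolComb S ↔ GuessableMC S Ordinal.omega0 := by
  rw [guessableMC_omega0_iff]
  exact ⟨BoolComb.exists_witnessMCNat, fun ⟨_, _, h⟩ => h.boolComb⟩
end
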